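/- arXiv:1309.0975 — 2 statements merged into one kernel-verified Lean document; each statement's English description precedes it below -/
import Mathlib

section
/- For the Lie algebra with brackets [e₂,e₃]=[e₁,e₄]=e₂, [e₂,e₁]=[e₄,e₃]=e₄ and metric g(x,y)=x¹y¹+x²y²-x³y³-x⁴y⁴, the Levi-Civita connection (Koszul formula) satisfies ∇J₁ = 0 for the standard structure J₁, i.e. ∇ₓ(J₁y) = J₁(∇ₓy) for all x,y; in particular F₁(x,y,z) = g((∇ₓJ₁)y,z) vanishes identically. -/
noncomputable section

/-- The underlying 4-dimensional real vector space. -/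
abbrev V : Type := Fin 4 → ℝ

/-- The standard basis of ℝ⁴. -/
def e : Fin 4 → V := fun i => Pi.single i 1

/-- The neutral metric g(x,y) = x¹y¹ + x²y² - x³y³ - x⁴y⁴. -/
def g (x y : V) : ℝ := x 0 * y 0 + x 1 * y 1 - x 2 * y 2 - x 3 * y 3

/-- J₁ of the standard hypercomplex structure. -/
def J1 (x : V) : V := ![-x 1, x 0, x 3, -x 2]

/-- J₂ of the standard hypercomplex structure. -/
def J2 (x : V) : V := ![-x 2, -x 3, x 0, x 1]

/-- J₃ of the standard hypercomplex structure. -/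
def J3 (x : V) : V := ![x 3, -x 2, x 1, -x 0]

/-- The bracket of type (hc3), case of signature (1,1):
[e₂,e₃]=[e₁,e₄]=e₂, [e₂,e₁]=[e₄,e₃]=e₄. -/
def br (x y : V) : V :=
  ![0, x 1 * y 2 - x 2 * y 1 + x 0 * y 3 - x 3 * y 0, 0,
    x 1 * y 0 - x 0 * y 1 + x 3 * y 2 - x 2 * y 3]

/- Both sides of the Koszul formula are tested against `z`; on the right-hand side, moving
`J₁` from `y` to `z` only changes the sign, and `J₁` is `g`-skew, so `∇ₓ(J₁y)` and
`J₁(∇ₓy)` pair identically with every `z`. -/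

lemma g_J1_left (u z : V) : g (J1 u) z = -g u (J1 z) := by
  simp only [g, J1, Matrix.cons_val]
  ring

lemma eq_of_forall_g_eq {u v : V} (h : ∀ z, g u z = g v z) : u = v := by
  funext i
  have hi := h (e i)
  fin_cases i <;> simpa [g, e] using hi

def koszul (x y z : V) : ℝ := g (br x y) z + g (br z x) y + g (br z y) x

lemma koszul_J1 (x y z : V) : koszul x (J1 y) z = -koszul x y (J1 z) := by
  simp only [koszul, g, br, J1, Matrix.cons_val]
  ring

/-- For the (hc3) Lie algebra, ∇J₁ = 0, i.e. F₁ vanishes identically. -/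
theorem hc3_J1_parallel (nabla : V →ₗ[ℝ] V →ₗ[ℝ] V)
    (hK : ∀ x y z : V,
      2 * g (nabla x y) z = g (br x y) z + g (br z x) y + g (br z y) x) :
    (∀ x y : V, nabla x (J1 y) = J1 (nabla x y)) ∧
    (∀ x y z : V, g (nabla x (J1 y) - J1 (nabla x y)) z = 0) := by
  have hJ : ∀ x y, nabla x (J1 y) = J1 (nabla x y) := fun x y =>
    eq_of_forall_g_eq fun z => by
      have h₁ := hK x (J1 y) z
      have h₂ := hK x y (J1 z)
      have hk := koszul_J1 x y z
      dsimp only [koszul] at hk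
      linarith [g_J1_left (nabla x y) z]
  refine ⟨hJ, fun x y z => ?_⟩
  simp [hJ, g]
end
end

section
/- For the Lie algebra of type (hc3) with brackets [e₂,e₃]=[e₁,e₄]=e₂, [e₂,e₁]=[e₄,e₃]=e₄, the Lee forms satisfy θ₁ = 0 and the only nonzero components of θ₂, θ₃ are θ₂(e₁) = θ₃(e₂) = 4. -/
noncomputable section

/-- Structure tensor F(x,y,z) = g((∇ₓJ)y, z) = g(∇ₓ(Jy) - J(∇ₓy), z). -/
def F (J : V → V) (nabla : V → V → V) (x y z : V) : ℝ :=
  g (nabla x (J y) - J (nabla x y)) z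

/-- Lee form θ(z) = Σᵢ gⁱⁱ F(eᵢ,eᵢ,z) with gⁱⁱ = (1,1,-1,-1). -/
def theta (J : V → V) (nabla : V → V → V) (z : V) : ℝ :=
  F J nabla (e 0) (e 0) z + F J nabla (e 1) (e 1) z
    - F J nabla (e 2) (e 2) z - F J nabla (e 3) (e 3) z

lemma g_sub_left (a b z : V) : g (a - b) z = g a z - g b z := by
  simp only [g, Pi.sub_apply]; ring

lemma g_J1_skew (v w : V) : g (J1 v) w = -1 * g v (J1 w) := by
  simp only [g, J1, Matrix.cons_val]; ring

lemma g_J2_symm (v w : V) : g (J2 v) w = 1 * g v (J2 w) := by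
  simp only [g, J2, Matrix.cons_val]; ring

lemma g_J3_symm (v w : V) : g (J3 v) w = 1 * g v (J3 w) := by
  simp only [g, J3, Matrix.cons_val]; ring

section LeviCivita

variable {nabla : V → V → V} (hK : ∀ x y z : V, 2 * g (nabla x y) z = koszul x y z)
include hK

lemma two_mul_F_eq_koszul {J : V → V} {s : ℝ} (hJ : ∀ v w : V, g (J v) w = s * g v (J w))
    (x y z : V) : 2 * F J nabla x y z = koszul x (J y) z - s * koszul x y (J z) := by
  rw [F, g_sub_left, hJ, mul_sub, ← mul_assoc, mul_comm 2 s, mul_assoc, hK, hK]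

lemma two_mul_theta_eq_koszul {J : V → V} {s : ℝ} (hJ : ∀ v w : V, g (J v) w = s * g v (J w))
    (z : V) :
    2 * theta J nabla z =
      (koszul (e 0) (J (e 0)) z - s * koszul (e 0) (e 0) (J z))
        + (koszul (e 1) (J (e 1)) z - s * koszul (e 1) (e 1) (J z))
        - (koszul (e 2) (J (e 2)) z - s * koszul (e 2) (e 2) (J z))
        - (koszul (e 3) (J (e 3)) z - s * koszul (e 3) (e 3) (J z)) := by
  simp only [theta, mul_sub, mul_add, two_mul_F_eq_koszul hK hJ]

lemma theta_J1 (z : V) : theta J1 nabla z = 0 := by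
  have h := two_mul_theta_eq_koszul hK g_J1_skew z
  simp only [koszul, g, br, J1, e, Pi.single_apply, Matrix.cons_val, Fin.reduceEq,
    ↓reduceIte] at h
  linear_combination h / 2

lemma theta_J2 (z : V) : theta J2 nabla z = 4 * z 0 := by
  have h := two_mul_theta_eq_koszul hK g_J2_symm z
  simp only [koszul, g, br, J2, e, Pi.single_apply, Matrix.cons_val, Fin.reduceEq,
    ↓reduceIte] at h
  linear_combination h / 2

lemma theta_J3 (z : V) : theta J3 nabla z = 4 * z 1 := by
  have h := two_mul_theta_eq_koszul hK g_J3_symm z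
  simp only [koszul, g, br, J3, e, Pi.single_apply, Matrix.cons_val, Fin.reduceEq,
    ↓reduceIte] at h
  linear_combination h / 2

end LeviCivita

/-- Lee forms of the (hc3) structure: θ₁ = 0 and θ₂(e₁)=θ₃(e₂)=4 are the only
nonzero components of θ₂, θ₃. -/
theorem hc3_lee_forms (nabla : V → V → V)
    (hK : ∀ x y z : V,
      2 * g (nabla x y) z = g (br x y) z + g (br z x) y + g (br z y) x) :
    (∀ z : V, theta J1 nabla z = 0) ∧
    (∀ i : Fin 4, theta J2 nabla (e i) = if i = 0 then 4 else 0) ∧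
    (∀ i : Fin 4, theta J3 nabla (e i) = if i = 1 then 4 else 0) := by
  refine ⟨theta_J1 hK, fun i => ?_, fun i => ?_⟩
  · rcases eq_or_ne i 0 with rfl | hi <;> simp [theta_J2 hK, e, *]
  · rcases eq_or_ne i 1 with rfl | hi <;> simp [theta_J3 hK, e, *]
end
end
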